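/- Consider the extended Langevin equation $\dot x = v$, $\dot v = \Lambda \nabla_x \log \hat\rho(x) - \Gamma v + \sigma \dot W_t$ with $\Lambda$ symmetric positive definite, $\Gamma$ positive definite, $\hat\rho$ a smooth positive density, and $\sigma$ satisfying $\Gamma\Lambda + \Lambda\Gamma^\top = \sigma\sigma^\top$. Then $\rho_{eq}(x,v) \propto \hat\rho(x)\exp(-\frac{1}{2}v^\top\Lambda^{-1}v)$ solves the stationary Fokker-Planck equation of this system. -/

import Mathlib

open Matrix

/-- Partial derivative in the `i`-th `x`-coordinate. -/
noncomputable def pdX {d : ℕ} (i : Fin d)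
    (f : (Fin d → ℝ) × (Fin d → ℝ) → ℝ)
    (z : (Fin d → ℝ) × (Fin d → ℝ)) : ℝ :=
  fderiv ℝ f z (Pi.single i 1, 0)

/-- Partial derivative in the `i`-th `v`-coordinate. -/
noncomputable def pdV {d : ℕ} (i : Fin d)
    (f : (Fin d → ℝ) × (Fin d → ℝ) → ℝ)
    (z : (Fin d → ℝ) × (Fin d → ℝ)) : ℝ :=
  fderiv ℝ f z (0, Pi.single i 1)

noncomputable def dotCLM {d : ℕ} (c : Fin d → ℝ) : (Fin d → ℝ) →L[ℝ] ℝ :=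
  ∑ i, c i • (ContinuousLinearMap.proj i : ((Fin d → ℝ)) →L[ℝ] ℝ)

@[simp] lemma dotCLM_apply {d : ℕ} (c e : Fin d → ℝ) : dotCLM c e = c ⬝ᵥ e := by
  simp [dotCLM, dotProduct]

lemma hasFDerivAt_quad {d : ℕ} (A : Matrix (Fin d) (Fin d) ℝ) (v : Fin d → ℝ) :
    HasFDerivAt (fun v : Fin d → ℝ => v ⬝ᵥ A.mulVec v) (dotCLM ((A + Aᵀ).mulVec v)) v := by
  have h : (fun w : Fin d → ℝ => w ⬝ᵥ A.mulVec w)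
      = fun w => ∑ i, ∑ j, A i j * (w i * w j) := by
    funext w
    simp [dotProduct, Matrix.mulVec, Finset.mul_sum]
    congr 1; funext i; congr 1; funext j; ring
  rw [h]
  have h2 : HasFDerivAt (fun w : Fin d → ℝ => ∑ i, ∑ j, A i j * (w i * w j))
      (∑ i, ∑ j, (A i j) • ((v i) • (ContinuousLinearMap.proj j : (Fin d → ℝ) →L[ℝ] ℝ)
        + (v j) • (ContinuousLinearMap.proj i : (Fin d → ℝ) →L[ℝ] ℝ))) v := by
    apply HasFDerivAt.fun_sum; intro i _
    apply HasFDerivAt.fun_sum; intro j _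
    exact ((hasFDerivAt_apply i v).mul (hasFDerivAt_apply j v)).const_mul (A i j)
  have key : ∀ e : Fin d → ℝ, ((A + Aᵀ).mulVec v) ⬝ᵥ e
      = ∑ i, ∑ j, A i j * (v i * e j + v j * e i) := by
    intro e
    simp [dotProduct, Matrix.mulVec, Matrix.transpose, add_mul, mul_add,
      Finset.sum_add_distrib, Finset.sum_mul, Finset.mul_sum]
    ring_nf
    congr 1
    rw [Finset.sum_comm]
  refine h2.congr_fderiv ?_
  ext e
  symm
  simpa [dotProduct, mul_add] using key e

/-- For the extended Langevin equation `ẋ = v`,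
`v̇ = Λ∇ₓ log ρ̂(x) - Γv + σẆ` with `ΓΛ + ΛΓᵀ = σσᵀ`,
`ρ_eq(x,v) ∝ ρ̂(x) exp(-½ vᵀΛ⁻¹v)` solves the stationary Fokker–Planck equation. -/
theorem extended_langevin_stationary_density {d : ℕ}
    (Λ Γ σ : Matrix (Fin d) (Fin d) ℝ)
    (hΛ : Λ.PosDef) (hΓ : ∀ v : Fin d → ℝ, v ≠ 0 → 0 < v ⬝ᵥ Γ.mulVec v)
    (hσ : Γ * Λ + Λ * Γᵀ = σ * σᵀ)
    (ρhat : (Fin d → ℝ) → ℝ) (hρpos : ∀ x, 0 < ρhat x)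
    (hρsmooth : ContDiff ℝ (⊤ : ℕ∞) ρhat)
    (ρeq : (Fin d → ℝ) × (Fin d → ℝ) → ℝ)
    (hρeq : ρeq = fun z =>
      ρhat z.1 * Real.exp (-(1 / 2) * (z.2 ⬝ᵥ Λ⁻¹.mulVec z.2)))
    (z : (Fin d → ℝ) × (Fin d → ℝ)) :
    -(∑ i, pdX i (fun y => y.2 i * ρeq y) z)
    - (∑ i, pdV i (fun y =>
        ((Λ.mulVec (fun j =>
            fderiv ℝ (fun w => Real.log (ρhat w)) y.1 (Pi.single j 1))) i
          - (Γ.mulVec y.2) i) * ρeq y) z)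
    + (1 / 2) * (∑ i, ∑ j, (σ * σᵀ) i j
        * pdV i (fun y => pdV j ρeq y) z) = 0 := by
  subst hρeq
  -- basic matrix facts
  have hd0 : IsUnit Λ.det := isUnit_iff_ne_zero.mpr hΛ.det_pos.ne'
  have hΛsym : Λᵀ = Λ := by
    have := hΛ.isHermitian
    simpa [Matrix.IsHermitian, Matrix.conjTranspose_eq_transpose_of_trivial] using this
  have hAsym : (Λ⁻¹)ᵀ = Λ⁻¹ := by
    rw [Matrix.transpose_nonsing_inv, hΛsym]
  have hΛA : Λ * Λ⁻¹ = 1 := Matrix.mul_nonsing_inv Λ hd0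
  have hAΛ : Λ⁻¹ * Λ = 1 := Matrix.nonsing_inv_mul Λ hd0
  -- differentiability of ρhat
  have hρd : ∀ x, HasFDerivAt ρhat (fderiv ℝ ρhat x) x := fun x =>
    ((hρsmooth.differentiable (by simp)).differentiableAt).hasFDerivAt
  -- derivative of the exponential factor
  have hE : ∀ v : Fin d → ℝ,
      HasFDerivAt (fun v : Fin d → ℝ => Real.exp (-(1 / 2) * (v ⬝ᵥ Λ⁻¹.mulVec v)))
        (Real.exp (-(1 / 2) * (v ⬝ᵥ Λ⁻¹.mulVec v)) •
          ((-(1 / 2) : ℝ) • dotCLM ((Λ⁻¹ + (Λ⁻¹)ᵀ).mulVec v))) v := fun v =>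
    ((hasFDerivAt_quad Λ⁻¹ v).const_mul (-(1 / 2))).exp
  -- master derivative of ρeq
  have hDρeq : ∀ y : (Fin d → ℝ) × (Fin d → ℝ),
      HasFDerivAt (fun y : (Fin d → ℝ) × (Fin d → ℝ) =>
          ρhat y.1 * Real.exp (-(1 / 2) * (y.2 ⬝ᵥ Λ⁻¹.mulVec y.2)))
        (ρhat y.1 • ((Real.exp (-(1 / 2) * (y.2 ⬝ᵥ Λ⁻¹.mulVec y.2)) •
            ((-(1 / 2) : ℝ) • dotCLM ((Λ⁻¹ + (Λ⁻¹)ᵀ).mulVec y.2))).comp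
            (ContinuousLinearMap.snd ℝ (Fin d → ℝ) (Fin d → ℝ)))
         + Real.exp (-(1 / 2) * (y.2 ⬝ᵥ Λ⁻¹.mulVec y.2)) •
            ((fderiv ℝ ρhat y.1).comp
              (ContinuousLinearMap.fst ℝ (Fin d → ℝ) (Fin d → ℝ)))) y := by
    intro y
    exact ((hρd y.1).comp y hasFDerivAt_fst).mul ((hE y.2).comp y hasFDerivAt_snd)
  -- value of the v-partials of ρeq
  have hpdV_ρ : ∀ (y : (Fin d → ℝ) × (Fin d → ℝ)) (j : Fin d),
      pdV j (fun y : (Fin d → ℝ) × (Fin d → ℝ) =>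
          ρhat y.1 * Real.exp (-(1 / 2) * (y.2 ⬝ᵥ Λ⁻¹.mulVec y.2))) y
        = (ρhat y.1 * Real.exp (-(1 / 2) * (y.2 ⬝ᵥ Λ⁻¹.mulVec y.2)))
          * (-((Λ⁻¹.mulVec y.2) j)) := by
    intro y j
    rw [pdV, (hDρeq y).fderiv]
    simp [hAsym, Matrix.add_mulVec, dotProduct_single]
    ring
  -- Term 1
  have h1 : ∀ i : Fin d,
      pdX i (fun y : (Fin d → ℝ) × (Fin d → ℝ) =>
          y.2 i * (ρhat y.1 * Real.exp (-(1 / 2) * (y.2 ⬝ᵥ Λ⁻¹.mulVec y.2)))) z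
        = z.2 i * (Real.exp (-(1 / 2) * (z.2 ⬝ᵥ Λ⁻¹.mulVec z.2))
            * fderiv ℝ ρhat z.1 (Pi.single i 1)) := by
    intro i
    have hc : HasFDerivAt (fun y : (Fin d → ℝ) × (Fin d → ℝ) => y.2 i)
        ((ContinuousLinearMap.proj i).comp
          (ContinuousLinearMap.snd ℝ (Fin d → ℝ) (Fin d → ℝ))) z :=
      ((ContinuousLinearMap.proj i).comp
          (ContinuousLinearMap.snd ℝ (Fin d → ℝ) (Fin d → ℝ))).hasFDerivAt
    rw [pdX, (hc.fun_mul (hDρeq z)).fderiv]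
    simp
  -- smoothness of the log-gradient term
  have hlog : ContDiff ℝ (⊤ : ℕ∞) (fun w => Real.log (ρhat w)) :=
    hρsmooth.log (fun x => (hρpos x).ne')
  have hfd : ContDiff ℝ (⊤ : ℕ∞) (fderiv ℝ (fun w => Real.log (ρhat w))) :=
    hlog.fderiv_right (by simp)
  have hGdiff : ∀ i : Fin d, DifferentiableAt ℝ
      (fun x : Fin d → ℝ => (Λ.mulVec (fun j =>
        fderiv ℝ (fun w => Real.log (ρhat w)) x (Pi.single j 1))) i) z.1 := by
    intro i
    have : (fun x : Fin d → ℝ => (Λ.mulVec (fun j =>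
        fderiv ℝ (fun w => Real.log (ρhat w)) x (Pi.single j 1))) i)
        = fun x => ∑ j, Λ i j *
          (fderiv ℝ (fun w => Real.log (ρhat w)) x (Pi.single j 1)) := by
      funext x; simp [Matrix.mulVec, dotProduct]
    rw [this]
    apply DifferentiableAt.fun_sum
    intro j _
    exact (((hfd.clm_apply contDiff_const).differentiable (by simp)).differentiableAt).const_mul _
  -- Term 2
  have h2 : ∀ i : Fin d,
      pdV i (fun y : (Fin d → ℝ) × (Fin d → ℝ) =>
        ((Λ.mulVec (fun j =>
            fderiv ℝ (fun w => Real.log (ρhat w)) y.1 (Pi.single j 1))) i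
          - (Γ.mulVec y.2) i)
        * (ρhat y.1 * Real.exp (-(1 / 2) * (y.2 ⬝ᵥ Λ⁻¹.mulVec y.2)))) z
      = -(Γ i i) * (ρhat z.1 * Real.exp (-(1 / 2) * (z.2 ⬝ᵥ Λ⁻¹.mulVec z.2)))
        + ((Λ.mulVec (fun j =>
            fderiv ℝ (fun w => Real.log (ρhat w)) z.1 (Pi.single j 1))) i
          - (Γ.mulVec z.2) i)
          * ((ρhat z.1 * Real.exp (-(1 / 2) * (z.2 ⬝ᵥ Λ⁻¹.mulVec z.2)))
            * (-((Λ⁻¹.mulVec z.2) i))) := by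
    intro i
    have hca : HasFDerivAt (fun y : (Fin d → ℝ) × (Fin d → ℝ) =>
        (Λ.mulVec (fun j =>
          fderiv ℝ (fun w => Real.log (ρhat w)) y.1 (Pi.single j 1))) i)
        ((fderiv ℝ (fun x : Fin d → ℝ => (Λ.mulVec (fun j =>
          fderiv ℝ (fun w => Real.log (ρhat w)) x (Pi.single j 1))) i) z.1).comp
          (ContinuousLinearMap.fst ℝ (Fin d → ℝ) (Fin d → ℝ))) z :=
      ((hGdiff i).hasFDerivAt).comp z hasFDerivAt_fst
    have hcb : HasFDerivAt (fun y : (Fin d → ℝ) × (Fin d → ℝ) => (Γ.mulVec y.2) i)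
        ((dotCLM (Γ i)).comp
          (ContinuousLinearMap.snd ℝ (Fin d → ℝ) (Fin d → ℝ))) z := by
      have heq : (fun y : (Fin d → ℝ) × (Fin d → ℝ) => (Γ.mulVec y.2) i)
          = fun y => ((dotCLM (Γ i)).comp
            (ContinuousLinearMap.snd ℝ (Fin d → ℝ) (Fin d → ℝ))) y := by
        funext y; simp [Matrix.mulVec]
      rw [heq]
      exact ((dotCLM (Γ i)).comp
        (ContinuousLinearMap.snd ℝ (Fin d → ℝ) (Fin d → ℝ))).hasFDerivAt
    rw [pdV, (((hca.fun_sub hcb)).fun_mul (hDρeq z)).fderiv]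
    simp [hAsym, Matrix.add_mulVec, dotProduct_single, Matrix.mulVec]
    ring
  -- Term 3
  have hinner : ∀ j : Fin d, (fun y : (Fin d → ℝ) × (Fin d → ℝ) =>
      pdV j (fun y : (Fin d → ℝ) × (Fin d → ℝ) =>
        ρhat y.1 * Real.exp (-(1 / 2) * (y.2 ⬝ᵥ Λ⁻¹.mulVec y.2))) y)
      = fun y : (Fin d → ℝ) × (Fin d → ℝ) =>
        (ρhat y.1 * Real.exp (-(1 / 2) * (y.2 ⬝ᵥ Λ⁻¹.mulVec y.2)))
          * (-((Λ⁻¹.mulVec y.2) j)) :=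
    fun j => funext fun y => hpdV_ρ y j
  have h3 : ∀ i j : Fin d,
      pdV i (fun y : (Fin d → ℝ) × (Fin d → ℝ) =>
        pdV j (fun y : (Fin d → ℝ) × (Fin d → ℝ) =>
          ρhat y.1 * Real.exp (-(1 / 2) * (y.2 ⬝ᵥ Λ⁻¹.mulVec y.2))) y) z
      = (ρhat z.1 * Real.exp (-(1 / 2) * (z.2 ⬝ᵥ Λ⁻¹.mulVec z.2)))
        * ((Λ⁻¹.mulVec z.2) j * (Λ⁻¹.mulVec z.2) i - Λ⁻¹ j i) := by
    intro i j
    have hm : HasFDerivAt (fun y : (Fin d → ℝ) × (Fin d → ℝ) =>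
        -((Λ⁻¹.mulVec y.2) j))
        (-((dotCLM (Λ⁻¹ j)).comp
          (ContinuousLinearMap.snd ℝ (Fin d → ℝ) (Fin d → ℝ)))) z := by
      have heq : (fun y : (Fin d → ℝ) × (Fin d → ℝ) => -((Λ⁻¹.mulVec y.2) j))
          = fun y => -(((dotCLM (Λ⁻¹ j)).comp
            (ContinuousLinearMap.snd ℝ (Fin d → ℝ) (Fin d → ℝ))) y) := by
        funext y; simp [Matrix.mulVec]
      rw [heq]
      exact ((dotCLM (Λ⁻¹ j)).comp
        (ContinuousLinearMap.snd ℝ (Fin d → ℝ) (Fin d → ℝ))).hasFDerivAt.neg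
    rw [pdV, hinner j, ((hDρeq z).fun_mul hm).fderiv]
    simp [hAsym, Matrix.add_mulVec, dotProduct_single]
    ring
  -- gradient of log
  have hglog : ∀ j : Fin d, fderiv ℝ (fun w => Real.log (ρhat w)) z.1 (Pi.single j 1)
      = (ρhat z.1)⁻¹ * fderiv ℝ ρhat z.1 (Pi.single j 1) := by
    intro j
    rw [((hρd z.1).log (hρpos z.1).ne').fderiv]
    simp
  simp only [h1, h2, h3, hglog, ← hσ]
  obtain ⟨g, hg⟩ : ∃ g : Fin d → ℝ, ∀ j, fderiv ℝ ρhat z.1 (Pi.single j 1) = g j :=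
    ⟨fun j => fderiv ℝ ρhat z.1 (Pi.single j 1), fun _ => rfl⟩
  simp only [hg]
  set r := ρhat z.1 with hr_def
  have hr : r ≠ 0 := (hρpos z.1).ne'
  set Ev := Real.exp (-(1 / 2) * (z.2 ⬝ᵥ Λ⁻¹.mulVec z.2)) with hEv_def
  set v := z.2 with hv_def
  set w := Λ⁻¹.mulVec v with hw_def
  have hsm : (fun j : Fin d => r⁻¹ * g j) = r⁻¹ • g := rfl
  rw [hsm, Matrix.mulVec_smul]
  have hΛw : Λ.mulVec w = v := by
    rw [hw_def, Matrix.mulVec_mulVec, hΛA, Matrix.one_mulVec]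
  have key1 : (Λ.mulVec g) ⬝ᵥ w = g ⬝ᵥ v := by
    calc (Λ.mulVec g) ⬝ᵥ w = w ⬝ᵥ Λ.mulVec g := dotProduct_comm _ _
    _ = Λ.vecMul w ⬝ᵥ g := dotProduct_mulVec _ _ _
    _ = (Λᵀ.mulVec w) ⬝ᵥ g := by rw [Matrix.mulVec_transpose]
    _ = v ⬝ᵥ g := by rw [hΛsym, hΛw]
    _ = g ⬝ᵥ v := dotProduct_comm _ _
  have hquadN : ∀ N : Matrix (Fin d) (Fin d) ℝ,
      (∑ i, ∑ j, N i j * (w j * w i)) = w ⬝ᵥ N.mulVec w := by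
    intro N
    simp [dotProduct, Matrix.mulVec, Finset.mul_sum]
    exact Finset.sum_congr rfl fun i _ => Finset.sum_congr rfl fun j _ => by ring
  have key2 : w ⬝ᵥ ((Γ * Λ + Λ * Γᵀ).mulVec w) = 2 * ((Γ.mulVec v) ⬝ᵥ w) := by
    have p1 : w ⬝ᵥ ((Γ * Λ).mulVec w) = (Γ.mulVec v) ⬝ᵥ w := by
      calc w ⬝ᵥ ((Γ * Λ).mulVec w) = w ⬝ᵥ (Γ.mulVec (Λ.mulVec w)) :=
            congrArg (fun u => w ⬝ᵥ u) (Matrix.mulVec_mulVec w Γ Λ).symm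
      _ = w ⬝ᵥ (Γ.mulVec v) := by rw [hΛw]
      _ = (Γ.mulVec v) ⬝ᵥ w := dotProduct_comm _ _
    have p2 : w ⬝ᵥ ((Λ * Γᵀ).mulVec w) = (Γ.mulVec v) ⬝ᵥ w := by
      calc w ⬝ᵥ ((Λ * Γᵀ).mulVec w) = w ⬝ᵥ (Λ.mulVec (Γᵀ.mulVec w)) :=
            congrArg (fun u => w ⬝ᵥ u) (Matrix.mulVec_mulVec w Λ Γᵀ).symm
      _ = Λ.vecMul w ⬝ᵥ (Γᵀ.mulVec w) := dotProduct_mulVec _ _ _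
      _ = (Λᵀ.mulVec w) ⬝ᵥ (Γᵀ.mulVec w) := by simp [Matrix.mulVec_transpose]
      _ = v ⬝ᵥ (Γᵀ.mulVec w) := by rw [hΛsym, hΛw]
      _ = Γᵀ.vecMul v ⬝ᵥ w := dotProduct_mulVec _ _ _
      _ = ((Γᵀ)ᵀ.mulVec v) ⬝ᵥ w := by rw [Matrix.mulVec_transpose]
      _ = (Γ.mulVec v) ⬝ᵥ w := by rw [Matrix.transpose_transpose]
    rw [Matrix.add_mulVec, dotProduct_add, p1, p2]
    ring
  have key3 : (∑ i, ∑ j, (Γ * Λ + Λ * Γᵀ) i j * Λ⁻¹ j i) = 2 * ∑ i, Γ i i := by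
    have htr : (∑ i, ∑ j, (Γ * Λ + Λ * Γᵀ) i j * Λ⁻¹ j i)
        = ((Γ * Λ + Λ * Γᵀ) * Λ⁻¹).trace := by
      simp [Matrix.trace, Matrix.mul_apply, Matrix.diag]
    rw [htr, add_mul, Matrix.trace_add, mul_assoc, hΛA, mul_one]
    have h4 : (Λ * Γᵀ * Λ⁻¹).trace = Γ.trace := by
      rw [Matrix.trace_mul_cycle, hAΛ, one_mul, Matrix.trace_transpose]
    rw [h4]
    simp [Matrix.trace, Matrix.diag]
    ring
  -- closed forms for the three sums
  have S1 : (∑ x, v x * (Ev * g x)) = Ev * (g ⬝ᵥ v) := by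
    simp [dotProduct, Finset.mul_sum]
    exact Finset.sum_congr rfl fun i _ => by ring
  have e1 : ∀ x, (-Γ x x * (r * Ev) + ((r⁻¹ • (Λ.mulVec g)) x - (Γ.mulVec v) x)
        * (r * Ev * -(w x)))
      = -(Γ x x * (r * Ev)) + (-(Ev * ((Λ.mulVec g) x * w x))
        + r * Ev * ((Γ.mulVec v) x * w x)) := by
    intro x
    simp only [Pi.smul_apply, smul_eq_mul]
    field_simp
    ring
  have S2 : (∑ x, (-Γ x x * (r * Ev) + ((r⁻¹ • (Λ.mulVec g)) x - (Γ.mulVec v) x)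
        * (r * Ev * -(w x))))
      = -((∑ i, Γ i i) * (r * Ev)) + (-(Ev * (g ⬝ᵥ v)) + r * Ev * ((Γ.mulVec v) ⬝ᵥ w)) := by
    rw [Finset.sum_congr rfl fun x _ => e1 x, Finset.sum_add_distrib, Finset.sum_add_distrib]
    congr 1
    · rw [Finset.sum_neg_distrib, Finset.sum_mul]
    congr 1
    · rw [← key1]
      simp [dotProduct, Finset.mul_sum]
    · simp [dotProduct, Finset.mul_sum]
  have e3 : ∀ x x1 : Fin d, (Γ * Λ + Λ * Γᵀ) x x1 * (r * Ev * (w x1 * w x - Λ⁻¹ x1 x))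
      = r * Ev * ((Γ * Λ + Λ * Γᵀ) x x1 * (w x1 * w x))
        - r * Ev * ((Γ * Λ + Λ * Γᵀ) x x1 * Λ⁻¹ x1 x) := fun _ _ => by ring
  have S3 : (∑ x, ∑ x1, (Γ * Λ + Λ * Γᵀ) x x1 * (r * Ev * (w x1 * w x - Λ⁻¹ x1 x)))
      = r * Ev * (2 * ((Γ.mulVec v) ⬝ᵥ w)) - r * Ev * (2 * ∑ i, Γ i i) := by
    simp only [e3, Finset.sum_sub_distrib, ← Finset.mul_sum]
    rw [hquadN, key2, key3]
  rw [S1, S2, S3]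
  ring
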